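/- arXiv:2204.04996 — 2 statements merged into one kernel-verified Lean document; each statement's English description precedes it below -/
import Mathlib

section
/- Let p and q be orthogonal pure imaginary octonions with \(p^2 = -1\). Then \(L_p \circ (L_p \circ L_q) = -L_q\) and \((L_p \circ L_q) \circ L_p = L_q\) as linear maps on the octonions. -/
noncomputable section
open Quaternion

/-- The octonions, as the Cayley–Dickson double of the real quaternions. -/
@[ext] structure Oct : Type where
  x : ℍ[ℝ]
  y : ℍ[ℝ]

namespace Oct

instance : Zero Oct := ⟨⟨0, 0⟩⟩
instance : One Oct := ⟨⟨1, 0⟩⟩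
instance : Add Oct := ⟨fun a b => ⟨a.x + b.x, a.y + b.y⟩⟩
instance : Neg Oct := ⟨fun a => ⟨-a.x, -a.y⟩⟩
instance : Sub Oct := ⟨fun a b => ⟨a.x - b.x, a.y - b.y⟩⟩
instance : SMul ℝ Oct := ⟨fun r a => ⟨r • a.x, r • a.y⟩⟩
/-- Cayley–Dickson multiplication. -/
instance : Mul Oct := ⟨fun a b => ⟨a.x * b.x - star b.y * a.y, b.y * a.x + a.y * star b.x⟩⟩

@[simp] lemma zero_x : (0 : Oct).x = 0 := rfl
@[simp] lemma zero_y : (0 : Oct).y = 0 := rfl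
@[simp] lemma one_x : (1 : Oct).x = 1 := rfl
@[simp] lemma one_y : (1 : Oct).y = 0 := rfl
@[simp] lemma add_x (a b : Oct) : (a + b).x = a.x + b.x := rfl
@[simp] lemma add_y (a b : Oct) : (a + b).y = a.y + b.y := rfl
@[simp] lemma neg_x (a : Oct) : (-a).x = -a.x := rfl
@[simp] lemma neg_y (a : Oct) : (-a).y = -a.y := rfl
@[simp] lemma sub_x (a b : Oct) : (a - b).x = a.x - b.x := rfl
@[simp] lemma sub_y (a b : Oct) : (a - b).y = a.y - b.y := rfl
@[simp] lemma smul_x (r : ℝ) (a : Oct) : (r • a).x = r • a.x := rfl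
@[simp] lemma smul_y (r : ℝ) (a : Oct) : (r • a).y = r • a.y := rfl
@[simp] lemma mul_x (a b : Oct) : (a * b).x = a.x * b.x - star b.y * a.y := rfl
@[simp] lemma mul_y (a b : Oct) : (a * b).y = b.y * a.x + a.y * star b.x := rfl

instance : AddCommGroup Oct where
  add_assoc a b c := by ext <;> simp [add_assoc]
  zero_add a := by ext <;> simp
  add_zero a := by ext <;> simp
  add_comm a b := by ext <;> simp [add_comm]
  neg_add_cancel a := by ext <;> simp
  sub_eq_add_neg a b := by ext <;> simp [sub_eq_add_neg]
  nsmul := nsmulRec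
  zsmul := zsmulRec

instance : Module ℝ Oct where
  one_smul a := by ext <;> simp
  mul_smul r s a := by ext <;> simp [mul_smul]
  smul_zero r := by ext <;> simp
  smul_add r a b := by ext <;> simp
  add_smul r s a := by ext <;> simp [add_smul]
  zero_smul a := by ext <;> simp

/-- Octonion conjugation. -/
def conj (a : Oct) : Oct := ⟨star a.x, -a.y⟩

/-- Real part. -/
def re (a : Oct) : ℝ := a.x.re

/-- The inner product `⟨a,b⟩ = Re (a * conj b)`. -/
def inner (a b : Oct) : ℝ := re (a * conj b)

/-- Left multiplication. -/
def L (a : Oct) : Oct → Oct := fun v => a * v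

/-- Right multiplication. -/
def R (a : Oct) : Oct → Oct := fun v => v * a

lemma mul_add' (a u v : Oct) : a * (u + v) = a * u + a * v := by
  ext <;> simp [mul_add, add_mul] <;> abel

lemma add_mul' (a b u : Oct) : (a + b) * u = a * u + b * u := by
  ext <;> simp [mul_add, add_mul] <;> abel

lemma mul_smul' (r : ℝ) (a u : Oct) : a * (r • u) = r • (a * u) := by
  ext <;> simp [mul_smul_comm, smul_mul_assoc, smul_sub, smul_add]

lemma smul_mul' (r : ℝ) (a u : Oct) : (r • a) * u = r • (a * u) := by
  ext <;> simp [mul_smul_comm, smul_mul_assoc, smul_sub, smul_add]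

/-- Left multiplication as a real-linear map. -/
def Llin (a : Oct) : Oct →ₗ[ℝ] Oct where
  toFun v := a * v
  map_add' u v := mul_add' a u v
  map_smul' r u := mul_smul' r a u

/-- The imaginary quaternion units. -/
def qi : ℍ[ℝ] := ⟨0, 1, 0, 0⟩
def qj : ℍ[ℝ] := ⟨0, 0, 1, 0⟩
def qk : ℍ[ℝ] := ⟨0, 0, 0, 1⟩

/-- The standard imaginary basis units of the octonions. -/
def i : Oct := ⟨qi, 0⟩
def j : Oct := ⟨qj, 0⟩
def k : Oct := ⟨qk, 0⟩
def l : Oct := ⟨0, 1⟩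
def il : Oct := ⟨0, qi⟩
def jl : Oct := ⟨0, qj⟩
def kl : Oct := ⟨0, qk⟩

/-- The standard basis of the octonions. -/
def basisSet : Set Oct := {1, i, j, k, l, il, jl, kl}

/-- The imaginary standard basis units. -/
def imSet : Set Oct := {i, j, k, l, il, jl, kl}

end Oct

/-! The octonions are left alternative, `a (a v) = (a a) v`. For `p² = -1` this gives
`p (p w) = -w`, the first identity. Polarizing the alternative law gives
`p (q w) + q (p w) = (p q + q p) w`, and for pure imaginary `p, q` the anticommutator `p q + q p`
is the real number `-2⟨p, q⟩`, here `0`; taking `w = p v` yields `p (q (p v)) = -q (p (p v)) = q v`. -/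

namespace Oct

instance : NonUnitalNonAssocRing Oct where
  left_distrib := mul_add'
  right_distrib := add_mul'
  zero_mul v := by ext <;> simp
  mul_zero v := by ext <;> simp

instance : MulOneClass Oct where
  one_mul v := by ext <;> simp
  mul_one v := by ext <;> simp

theorem left_alternative (a v : Oct) : a * (a * v) = a * a * v := by
  ext <;> simp <;> ring

theorem mul_mul_add_mul_mul (a b v : Oct) :
    a * (b * v) + b * (a * v) = (a * b + b * a) * v := by
  have h := left_alternative (a + b) v
  simp only [add_mul, mul_add, left_alternative a, left_alternative b] at h
  rw [add_mul]
  linear_combination (norm := abel) h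

theorem mul_add_mul_swap_eq_neg_two_inner {p q : Oct} (hp : conj p = -p) (hq : conj q = -q) :
    p * q + q * p = (-2 * inner p q) • 1 := by
  have hp0 : p.x.re = 0 := Quaternion.star_eq_neg.mp (congrArg x hp)
  have hq0 : q.x.re = 0 := Quaternion.star_eq_neg.mp (congrArg x hq)
  ext <;> simp [inner, re, conj, hp0, hq0] <;> ring

end Oct

/-- For orthogonal pure imaginary octonions `p, q` with `p² = -1`, we have
`L p ∘ (L p ∘ L q) = -L q` and `(L p ∘ L q) ∘ L p = L q`. -/
theorem Lp_Lp_Lq (p q : Oct)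
    (hp : Oct.conj p = -p) (hq : Oct.conj q = -q) (hpq : Oct.inner p q = 0)
    (hp2 : p * p = -1) :
    Oct.L p ∘ (Oct.L p ∘ Oct.L q) = -(Oct.L q) ∧
      (Oct.L p ∘ Oct.L q) ∘ Oct.L p = Oct.L q := by
  have hsq (w : Oct) : p * (p * w) = -w := by rw [Oct.left_alternative, hp2, neg_one_mul]
  have hanti : p * q + q * p = 0 := by
    rw [Oct.mul_add_mul_swap_eq_neg_two_inner hp hq, hpq, mul_zero, zero_smul]
  refine ⟨funext fun v => hsq (q * v), funext fun v => ?_⟩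
  have h := Oct.mul_mul_add_mul_mul p q (p * v)
  rwa [hanti, zero_mul, hsq, mul_neg, add_neg_eq_zero] at h
end
end

section
/- Let p, q, r be mutually orthogonal pure imaginary octonions. Then the commutator of left multiplications satisfies \([L_r, L_p \circ L_q] = 0\), i.e. \(L_r \circ L_p \circ L_q = L_p \circ L_q \circ L_r\) as linear maps on the octonions. -/
noncomputable section
open Quaternion

/-! Polarizing the left alternative law `a (ā v) = |a|² v` gives
`a (b̄ v) + b (ā v) = 2 ⟨a, b⟩ v`. Hence left multiplications by orthogonal pure imaginary
octonions anticommute, and moving `L r` past `L p` and then `L q` costs two cancelling signs. -/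

namespace Oct

lemma mul_neg' (a u : Oct) : a * -u = -(a * u) :=
  (Llin a).map_neg u

lemma neg_mul' (a u : Oct) : -a * u = -(a * u) := by
  simpa only [neg_one_smul] using smul_mul' (-1) a u

lemma mul_conj_mul_add_mul_conj_mul (a b v : Oct) :
    a * (conj b * v) + b * (conj a * v) = (2 * inner a b) • v := by
  ext <;> simp only [inner, re, conj, mul_x, mul_y, add_x, add_y, smul_x, smul_y,
    Quaternion.re_add, Quaternion.imI_add, Quaternion.imJ_add, Quaternion.imK_add,
    Quaternion.re_sub, Quaternion.imI_sub, Quaternion.imJ_sub, Quaternion.imK_sub,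
    Quaternion.re_neg, Quaternion.imI_neg, Quaternion.imJ_neg, Quaternion.imK_neg,
    Quaternion.re_star, Quaternion.imI_star, Quaternion.imJ_star, Quaternion.imK_star,
    Quaternion.re_smul, Quaternion.imI_smul, Quaternion.imJ_smul, Quaternion.imK_smul,
    Quaternion.re_mul, Quaternion.imI_mul, Quaternion.imJ_mul, Quaternion.imK_mul, smul_eq_mul,
    star_neg] <;> ring

lemma mul_mul_eq_neg_mul_mul {a b : Oct} (ha : conj a = -a) (hb : conj b = -b)
    (hab : inner a b = 0) (v : Oct) : a * (b * v) = -(b * (a * v)) := by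
  have h := mul_conj_mul_add_mul_conj_mul a b v
  rw [ha, hb, hab, mul_zero, zero_smul, neg_mul', neg_mul', mul_neg', mul_neg', ← neg_add,
    neg_eq_zero] at h
  exact eq_neg_of_add_eq_zero_left h

end Oct

theorem Lr_commutes_LpLq_general (p q r : Oct)
    (hp : Oct.conj p = -p) (hq : Oct.conj q = -q) (hr : Oct.conj r = -r)
    (hpr : Oct.inner p r = 0) (hqr : Oct.inner q r = 0) :
    Oct.L r ∘ (Oct.L p ∘ Oct.L q) = (Oct.L p ∘ Oct.L q) ∘ Oct.L r := by
  funext v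
  show r * (p * (q * v)) = p * (q * (r * v))
  calc r * (p * (q * v)) = -(p * (r * (q * v))) := by
        rw [Oct.mul_mul_eq_neg_mul_mul hp hr hpr, neg_neg]
    _ = -(p * -(q * (r * v))) := by rw [Oct.mul_mul_eq_neg_mul_mul hq hr hqr, neg_neg]
    _ = p * (q * (r * v)) := by rw [Oct.mul_neg', neg_neg]

/-- For mutually orthogonal pure imaginary octonions `p, q, r`, the operator
`L r` commutes with `L p ∘ L q`. -/
theorem Lr_commutes_LpLq (p q r : Oct)
    (hp : Oct.conj p = -p) (hq : Oct.conj q = -q) (hr : Oct.conj r = -r)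
    (hpq : Oct.inner p q = 0) (hpr : Oct.inner p r = 0) (hqr : Oct.inner q r = 0) :
    Oct.L r ∘ (Oct.L p ∘ Oct.L q) = (Oct.L p ∘ Oct.L q) ∘ Oct.L r :=
  Lr_commutes_LpLq_general p q r hp hq hr hpr hqr
end
end
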